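/- arXiv:1311.3669 — 4 statements merged into one kernel-verified Lean document; each statement's English description precedes it below -/
import Mathlib

section
/- Let σ : Finset V → ℝ be a monotone nondecreasing submodular function with σ(∅) = 0, and suppose we have access to estimates σ̂ with |σ̂(A) - σ(A)| ≤ ε for all A with |A| ≤ C. Then the greedy algorithm that at each of C steps adds the element maximizing σ̂-marginal gain returns a set with σ(Â) ≥ (1 - 1/e)·max_{|A|≤C} σ(A) - 2Cε. -/
open Finset

private lemma marg_sum {V : Type*} [DecidableEq V]
    (σ : Finset V → ℝ)
    (hsubmod : ∀ A B : Finset V, A ⊆ B → ∀ v ∉ B,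
      σ (insert v B) - σ B ≤ σ (insert v A) - σ A)
    (A : Finset V) :
    ∀ S : Finset V, Disjoint A S →
      σ (A ∪ S) - σ A ≤ ∑ v ∈ S, (σ (insert v A) - σ A) := by
  intro S
  induction S using Finset.induction_on with
  | empty => simp
  | @insert w s hw ih =>
    intro hd
    have hwA : w ∉ A := fun h => (Finset.disjoint_left.mp hd h (mem_insert_self w s))
    have hds : Disjoint A s := hd.mono_right (subset_insert _ _)
    have hwAs : w ∉ A ∪ s := by simp [hwA, hw]
    have h1 : σ (insert w (A ∪ s)) - σ (A ∪ s) ≤ σ (insert w A) - σ A :=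
      hsubmod A (A ∪ s) subset_union_left w hwAs
    have h2 := ih hds
    have : A ∪ insert w s = insert w (A ∪ s) := by
      ext x; simp [or_comm, or_left_comm]
    rw [this, Finset.sum_insert hw]
    linarith

/-- Greedy maximization of a monotone submodular function with a noisy value
oracle `σ̂` satisfying `|σ̂(A) - σ(A)| ≤ ε` for all `|A| ≤ C`: the greedy set
`A C` (built in `C` steps, each adding the element maximizing the estimated
value) satisfies `σ(A C) ≥ (1 - 1/e)·OPT - 2Cε`. -/
theorem noisy_greedy_submodular_maximization
    {V : Type*} [Fintype V] [DecidableEq V] [Nonempty V]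
    (σ σhat : Finset V → ℝ) (ε : ℝ) (hε : 0 ≤ ε) (C : ℕ) (hC : 1 ≤ C)
    (hmono : ∀ A B : Finset V, A ⊆ B → σ A ≤ σ B)
    (hsubmod : ∀ A B : Finset V, A ⊆ B → ∀ v ∉ B,
      σ (insert v B) - σ B ≤ σ (insert v A) - σ A)
    (hzero : σ ∅ = 0)
    (happrox : ∀ A : Finset V, A.card ≤ C → |σhat A - σ A| ≤ ε)
    (A : ℕ → Finset V) (hA0 : A 0 = ∅)
    (hgreedy : ∀ k < C, ∃ i ∉ A k,
      A (k + 1) = insert i (A k) ∧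
      ∀ j : V, σhat (insert j (A k)) ≤ σhat (insert i (A k))) :
    ∀ B : Finset V, B.card ≤ C →
      σ (A C) ≥ (1 - 1 / Real.exp 1) * σ B - 2 * C * ε := by
  intro B hB
  have hCpos : (0:ℝ) < C := by exact_mod_cast hC
  -- cardinality of greedy sets
  have hcard : ∀ k ≤ C, (A k).card = k := by
    intro k
    induction k with
    | zero => intro _; simp [hA0]
    | succ n ih =>
      intro hn
      obtain ⟨i, hi, hAeq, _⟩ := hgreedy n (by omega)
      rw [hAeq, Finset.card_insert_of_notMem hi, ih (by omega)]
  have hBnn : 0 ≤ σ B := by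
    have := hmono ∅ B (empty_subset B); linarith [hzero]
  -- key recurrence
  have hrec : ∀ k < C, σ B - σ (A (k+1)) ≤ (1 - 1/C) * (σ B - σ (A k)) + 2*ε := by
    intro k hk
    obtain ⟨i, hi, hAeq, hmax⟩ := hgreedy k hk
    have hAk : (A k).card = k := hcard k (le_of_lt hk)
    set δ := σ B - σ (A k) with hδ
    have hmonok : σ (A k) ≤ σ (A (k+1)) := by
      rw [hAeq]; exact hmono _ _ (subset_insert _ _)
    by_cases hδpos : 0 ≤ δ
    · -- the good case: some element of B \ A k has large marginal gain
      have hgain : ∃ v, δ / C ≤ σ (insert v (A k)) - σ (A k) := by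
        rcases eq_or_ne (B \ A k) ∅ with hempty | hne
        · -- B ⊆ A k, so δ ≤ 0, hence δ = 0
          have hsub : B ⊆ A k := by
            intro x hx
            by_contra hxn
            exact (Finset.notMem_empty x) (hempty ▸ Finset.mem_sdiff.mpr ⟨hx, hxn⟩)
          have : σ B ≤ σ (A k) := hmono _ _ hsub
          refine ⟨Classical.arbitrary V, ?_⟩
          have : δ ≤ 0 := by simp [hδ]; linarith
          have h1 : δ / C ≤ 0 := div_nonpos_of_nonpos_of_nonneg this (le_of_lt hCpos)
          have h2 : σ (A k) ≤ σ (insert (Classical.arbitrary V) (A k)) :=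
            hmono _ _ (subset_insert _ _)
          linarith
        · set S := B \ A k with hS
          have hSne : S.Nonempty := Finset.nonempty_iff_ne_empty.mpr hne
          have hdisj : Disjoint (A k) S := Finset.disjoint_sdiff
          have hsum : δ ≤ ∑ v ∈ S, (σ (insert v (A k)) - σ (A k)) := by
            have h1 := marg_sum σ hsubmod (A k) S hdisj
            have h2 : σ B ≤ σ (A k ∪ S) := by
              apply hmono
              intro x hx
              by_cases hxA : x ∈ A k
              · exact Finset.mem_union_left _ hxA
              · exact Finset.mem_union_right _ (Finset.mem_sdiff.mpr ⟨hx, hxA⟩)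
            linarith
          have hScard : (S.card : ℝ) ≤ C := by
            exact_mod_cast le_trans (Finset.card_le_card (Finset.sdiff_subset)) hB
          have hScpos : (0:ℝ) < S.card := by exact_mod_cast Finset.card_pos.mpr hSne
          have havg : ∃ v ∈ S, δ / S.card ≤ σ (insert v (A k)) - σ (A k) := by
            by_contra hcon
            push_neg at hcon
            have : ∑ v ∈ S, (σ (insert v (A k)) - σ (A k)) < ∑ _v ∈ S, δ / S.card :=
              Finset.sum_lt_sum_of_nonempty hSne hcon
            rw [Finset.sum_const, nsmul_eq_mul, mul_div_cancel₀ _ (ne_of_gt hScpos)] at this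
            linarith
          obtain ⟨v, _, hv⟩ := havg
          refine ⟨v, le_trans ?_ hv⟩
          exact div_le_div_of_nonneg_left hδpos hScpos hScard
      obtain ⟨v, hv⟩ := hgain
      have hci : (insert i (A k)).card ≤ C := by
        rw [Finset.card_insert_of_notMem hi, hAk]; omega
      have hcv : (insert v (A k)).card ≤ C :=
        le_trans (Finset.card_insert_le _ _) (by rw [hAk]; omega)
      have e1 := abs_le.mp (happrox _ hci)
      have e2 := abs_le.mp (happrox _ hcv)
      have e3 := hmax v
      have hstep : σ (insert v (A k)) - 2*ε ≤ σ (A (k+1)) := by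
        rw [hAeq]; linarith [e1.1, e1.2, e2.1, e2.2]
      have : δ / C ≤ σ (A (k+1)) - σ (A k) + 2*ε := by linarith
      have hdiv : δ / C = (1/C) * δ := by ring
      rw [hdiv] at this
      nlinarith
    · push_neg at hδpos
      have h1 : (1 - 1/(C:ℝ)) * δ ≥ δ := by
        have h2 : 1/(C:ℝ) ≤ 1 := by
          rw [div_le_one hCpos]; exact_mod_cast hC
        nlinarith [one_div_pos.mpr hCpos]
      have : σ B - σ (A (k+1)) ≤ δ := by simp [hδ]; linarith
      linarith
  -- iterate the recurrence
  have hind : ∀ k ≤ C, σ B - σ (A k) ≤ (1 - 1/(C:ℝ))^k * σ B + 2*k*ε := by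
    intro k
    induction k with
    | zero => intro _; simp [hA0, hzero]
    | succ n ih =>
      intro hn
      have h1 := hrec n (by omega)
      have h2 := ih (by omega)
      have hq0 : (0:ℝ) ≤ 1 - 1/C := by
        have : 1/(C:ℝ) ≤ 1 := by rw [div_le_one hCpos]; exact_mod_cast hC
        linarith
      have h3 : (1 - 1/(C:ℝ)) * (σ B - σ (A n)) ≤
          (1 - 1/(C:ℝ)) * ((1 - 1/(C:ℝ))^n * σ B + 2*n*ε) :=
        mul_le_mul_of_nonneg_left h2 hq0
      have hq1 : (1:ℝ) - 1/C ≤ 1 := by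
        have := one_div_pos.mpr hCpos; linarith
      have hnε : (0:ℝ) ≤ 2*n*ε := by positivity
      have h4 : (1 - 1/(C:ℝ)) * (2*n*ε) ≤ 2*n*ε := by nlinarith
      have h5 : σ B - σ (A (n+1)) ≤ (1 - 1/(C:ℝ))^(n+1) * σ B + 2*n*ε + 2*ε := by
        rw [pow_succ]
        nlinarith
      push_cast
      linarith
  have hfin := hind C le_rfl
  have hq0 : (0:ℝ) ≤ 1 - 1/C := by
    have : 1/(C:ℝ) ≤ 1 := by rw [div_le_one hCpos]; exact_mod_cast hC
    linarith
  have hexp : (1 - 1/(C:ℝ))^C ≤ 1 / Real.exp 1 := by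
    have h1 : (1:ℝ) - 1/C ≤ Real.exp (-(1/C)) := by
      have := Real.add_one_le_exp (-(1/(C:ℝ)))
      linarith
    calc (1 - 1/(C:ℝ))^C ≤ (Real.exp (-(1/C)))^C := pow_le_pow_left₀ hq0 h1 C
      _ = Real.exp ((C:ℝ) * (-(1/C))) := by rw [← Real.exp_nat_mul]
      _ = Real.exp (-1) := by
          congr 1
          field_simp
      _ = 1 / Real.exp 1 := by rw [Real.exp_neg]; ring
  have hmul : (1 - 1/(C:ℝ))^C * σ B ≤ (1 / Real.exp 1) * σ B :=
    mul_le_mul_of_nonneg_right hexp hBnn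
  linarith
end

section
/- Let σ : Finset V → ℝ be monotone nondecreasing and submodular with σ(∅) = 0. The exact greedy algorithm (picking the element of maximum true marginal gain at each of C steps) returns a set A_C with σ(A_C) ≥ (1 - 1/e)·max_{|A| ≤ C} σ(A). -/
/-!
Let `B` be any set of size at most `C` and `d k = σ B - σ (A k)` the greedy gap. By monotonicity
and submodularity, `d k ≤ σ (A k ∪ B) - σ (A k)` is at most the sum of the marginal gains of the
elements of `B` at `A k`, each of which is at most the greedy gain `d k - d (k + 1)`. Hence
`d (k + 1) ≤ (1 - 1/C) d k`, so `d C ≤ (1 - 1/C)^C σ B ≤ σ B / e`.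
-/

open Finset

section Submodular

variable {V : Type*} [DecidableEq V] {σ : Finset V → ℝ}

theorem sub_le_sum_marginal_of_submodular
    (hsubmod : ∀ A B : Finset V, A ⊆ B → ∀ v ∉ B,
      σ (insert v B) - σ B ≤ σ (insert v A) - σ A)
    (A B : Finset V) :
    σ (A ∪ B) - σ A ≤ ∑ v ∈ B \ A, (σ (insert v A) - σ A) := by
  induction B using Finset.induction_on with
  | empty => simp
  | insert b s hbs ih =>
    by_cases hbA : b ∈ A
    · rwa [union_insert, insert_eq_of_mem (mem_union_left s hbA), insert_sdiff_of_mem _ hbA]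
    · have hbAs : b ∉ A ∪ s := by simp [hbA, hbs]
      rw [union_insert, insert_sdiff_of_notMem _ hbA, sum_insert (by simp [hbs])]
      linarith [hsubmod A (A ∪ s) subset_union_left b hbAs]

theorem sub_le_card_mul_max_marginal
    (hmono : ∀ A B : Finset V, A ⊆ B → σ A ≤ σ B)
    (hsubmod : ∀ A B : Finset V, A ⊆ B → ∀ v ∉ B,
      σ (insert v B) - σ B ≤ σ (insert v A) - σ A)
    {A : Finset V} {i : V} (hmax : ∀ j, σ (insert j A) ≤ σ (insert i A)) (B : Finset V) :
    σ B - σ A ≤ #B * (σ (insert i A) - σ A) := by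
  have hgain : 0 ≤ σ (insert i A) - σ A := sub_nonneg.2 (hmono _ _ (subset_insert i A))
  calc σ B - σ A ≤ σ (A ∪ B) - σ A := by linarith [hmono B (A ∪ B) subset_union_right]
    _ ≤ ∑ v ∈ B \ A, (σ (insert v A) - σ A) := sub_le_sum_marginal_of_submodular hsubmod A B
    _ ≤ ∑ _v ∈ B \ A, (σ (insert i A) - σ A) := sum_le_sum fun v _ => by linarith [hmax v]
    _ = #(B \ A) * (σ (insert i A) - σ A) := by rw [sum_const, nsmul_eq_mul]
    _ ≤ #B * (σ (insert i A) - σ A) := by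
      gcongr
      exact sdiff_subset

end Submodular

theorem le_one_sub_one_div_pow_mul {d : ℕ → ℝ} {c : ℝ} (hc : 1 ≤ c) {n : ℕ}
    (h : ∀ k < n, d k ≤ c * (d k - d (k + 1))) :
    d n ≤ (1 - 1 / c) ^ n * d 0 := by
  induction n with
  | zero => simp
  | succ n ih =>
    have hstep : d (n + 1) ≤ (1 - 1 / c) * d n := by
      have hc0 : 0 < c := by linarith
      rw [one_sub_div hc0.ne', div_mul_eq_mul_div, le_div_iff₀ hc0]
      linarith [h n n.lt_succ_self]
    have hq : 0 ≤ 1 - 1 / c := sub_nonneg.2 ((div_le_one (by linarith)).2 hc)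
    calc d (n + 1) ≤ (1 - 1 / c) * d n := hstep
      _ ≤ (1 - 1 / c) * ((1 - 1 / c) ^ n * d 0) :=
        mul_le_mul_of_nonneg_left (ih fun k hk => h k (by omega)) hq
      _ = (1 - 1 / c) ^ (n + 1) * d 0 := by ring

theorem greedy_submodular_maximization_general
    {V : Type*} [DecidableEq V]
    (σ : Finset V → ℝ) (C : ℕ)
    (hmono : ∀ A B : Finset V, A ⊆ B → σ A ≤ σ B)
    (hsubmod : ∀ A B : Finset V, A ⊆ B → ∀ v ∉ B,
      σ (insert v B) - σ B ≤ σ (insert v A) - σ A)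
    (hzero : σ ∅ = 0)
    (A : ℕ → Finset V) (hA0 : A 0 = ∅)
    (hgreedy : ∀ k < C, ∃ i ∉ A k,
      A (k + 1) = insert i (A k) ∧
      ∀ j : V, σ (insert j (A k)) ≤ σ (insert i (A k))) :
    ∀ B : Finset V, B.card ≤ C →
      σ (A C) ≥ (1 - 1 / Real.exp 1) * σ B := by
  intro B hB
  obtain rfl | hC := C.eq_zero_or_pos
  · simp [card_eq_zero.1 (Nat.le_zero.1 hB), hA0, hzero]
  have hσB : 0 ≤ σ B := hzero ▸ hmono ∅ B (empty_subset B)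
  have hgap : ∀ k < C, σ B - σ (A k) ≤ C * ((σ B - σ (A k)) - (σ B - σ (A (k + 1)))) := by
    intro k hk
    obtain ⟨i, -, hAk, hmax⟩ := hgreedy k hk
    rw [hAk, sub_sub_sub_cancel_left]
    calc σ B - σ (A k) ≤ #B * (σ (insert i (A k)) - σ (A k)) :=
          sub_le_card_mul_max_marginal hmono hsubmod hmax B
      _ ≤ C * (σ (insert i (A k)) - σ (A k)) := by
        gcongr
        exact sub_nonneg.2 (hmono _ _ (subset_insert i (A k)))
  have hdecay := le_one_sub_one_div_pow_mul (d := fun k => σ B - σ (A k))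
    (by exact_mod_cast hC) hgap
  have hexp : (1 - 1 / (C : ℝ)) ^ C ≤ 1 / Real.exp 1 := by
    simpa [Real.exp_neg] using Real.one_sub_div_pow_le_exp_neg (n := C) (t := 1)
      (by exact_mod_cast hC)
  simp only [hA0, hzero, sub_zero] at hdecay
  linarith [mul_le_mul_of_nonneg_right hexp hσB]

/-- Exact greedy maximization of a monotone submodular function with σ(∅) = 0:
after `C` steps, `σ(A C) ≥ (1 - 1/e)·max_{|B| ≤ C} σ(B)`. -/
theorem greedy_submodular_maximization
    {V : Type*} [Fintype V] [DecidableEq V] [Nonempty V]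
    (σ : Finset V → ℝ) (C : ℕ) (hC : 1 ≤ C)
    (hmono : ∀ A B : Finset V, A ⊆ B → σ A ≤ σ B)
    (hsubmod : ∀ A B : Finset V, A ⊆ B → ∀ v ∉ B,
      σ (insert v B) - σ B ≤ σ (insert v A) - σ A)
    (hzero : σ ∅ = 0)
    (A : ℕ → Finset V) (hA0 : A 0 = ∅)
    (hgreedy : ∀ k < C, ∃ i ∉ A k,
      A (k + 1) = insert i (A k) ∧
      ∀ j : V, σ (insert j (A k)) ≤ σ (insert i (A k))) :
    ∀ B : Finset V, B.card ≤ C →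
      σ (A C) ≥ (1 - 1 / Real.exp 1) * σ B :=
  greedy_submodular_maximization_general σ C hmono hsubmod hzero A hA0 hgreedy
end

section
/- The influence function σ(·, T) defined by σ(A,T) = E[|{i ∈ V : min_{s∈A} d_τ(s,i) ≤ T}|] is submodular: for all A ⊆ B ⊆ V and v ∉ B, σ(A ∪ {v}, T) - σ(A, T) ≥ σ(B ∪ {v}, T) - σ(B, T). -/
open MeasureTheory
open scoped ENNReal NNReal

/-- `p` is a directed path from `s` to `i` in the graph with edge relation `E`. -/
def IsPath {V : Type*} (E : V → V → Prop) (s i : V) (p : List V) : Prop :=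
  p.head? = some s ∧ p.getLast? = some i ∧ p.Chain' E

/-- Total weight of a path. -/
noncomputable def pathWeight {V : Type*} (τ : V → V → ℝ≥0∞) (p : List V) : ℝ≥0∞ :=
  ((p.zip p.tail).map fun e => τ e.1 e.2).sum

/-- Shortest-path distance from `s` to `i`. -/
noncomputable def spDist {V : Type*} (E : V → V → Prop) (τ : V → V → ℝ≥0∞)
    (s i : V) : ℝ≥0∞ :=
  ⨅ (p : List V) (_ : IsPath E s i p), pathWeight τ p

/-- Influence: expected number of nodes within shortest-path distance `T` of
the source set `A`, under random nonnegative edge weights `τ`. -/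
noncomputable def influence {V : Type*} [Fintype V] {Ω : Type*}
    [MeasurableSpace Ω] (μ : Measure Ω) (E : V → V → Prop)
    (τ : Ω → V → V → ℝ≥0∞) (A : Finset V) (T : ℝ≥0) : ℝ :=
  ∫ ω, ((Finset.univ.filter fun i : V =>
      (⨅ s ∈ A, spDist E (τ ω) s i) ≤ (T : ℝ≥0∞)).card : ℝ) ∂μ

/-! For fixed weights the nodes covered by `insert v C` are those covered by `C` together with
those within distance `T` of `v`, so the marginal gain of `v` is the number of nodes near `v`
not yet covered by `C`, which can only shrink as `C` grows. Integrating the pointwise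
inequality gives the claim. -/

open scoped Finset

lemma Finset.card_union_add_card_le_of_subset {α : Type*} [DecidableEq α] {X Y : Finset α}
    (hXY : X ⊆ Y) (N : Finset α) : #(Y ∪ N) + #X ≤ #(X ∪ N) + #Y := by
  rw [Finset.union_comm Y, Finset.union_comm X, ← Finset.card_sdiff_add_card N Y,
    ← Finset.card_sdiff_add_card N X]
  have : #(N \ Y) ≤ #(N \ X) := Finset.card_le_card (Finset.sdiff_subset_sdiff le_rfl hXY)
  omega

lemma MeasureTheory.integral_sub_le_integral_sub_of_add_le {Ω : Type*} [MeasurableSpace Ω]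
    {μ : Measure Ω} {f g h k : Ω → ℝ} (hf : Integrable f μ) (hg : Integrable g μ)
    (hh : Integrable h μ) (hk : Integrable k μ) (hle : ∀ ω, f ω + g ω ≤ h ω + k ω) :
    ∫ ω, f ω ∂μ - ∫ ω, k ω ∂μ ≤ ∫ ω, h ω ∂μ - ∫ ω, g ω ∂μ := by
  have : ∫ ω, f ω + g ω ∂μ ≤ ∫ ω, h ω + k ω ∂μ := integral_mono (hf.add hg) (hh.add hk) hle
  rw [integral_add hf hg, integral_add hh hk] at this
  linarith

section Coverage

variable {V : Type*} [Fintype V] (E : V → V → Prop) (w : V → V → ℝ≥0∞) (T : ℝ≥0)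

noncomputable def coverSet (C : Finset V) : Finset V :=
  Finset.univ.filter fun i : V => (⨅ s ∈ C, spDist E w s i) ≤ (T : ℝ≥0∞)

lemma coverSet_mono {A B : Finset V} (hAB : A ⊆ B) : coverSet E w T A ⊆ coverSet E w T B := by
  intro i hi
  simp only [coverSet, Finset.mem_filter, Finset.mem_univ, true_and] at hi ⊢
  exact (biInf_mono hAB).trans hi

lemma coverSet_insert [DecidableEq V] (C : Finset V) (v : V) :
    coverSet E w T (insert v C) = coverSet E w T C ∪ coverSet E w T {v} := by
  ext i
  simp only [coverSet, Finset.mem_filter, Finset.mem_univ, true_and, Finset.mem_union,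
    Finset.iInf_insert, Finset.iInf_singleton, inf_le_iff]
  tauto

lemma card_coverSet_insert_add_card_le [DecidableEq V] {A B : Finset V} (hAB : A ⊆ B) (v : V) :
    #(coverSet E w T (insert v B)) + #(coverSet E w T A) ≤
      #(coverSet E w T (insert v A)) + #(coverSet E w T B) := by
  rw [coverSet_insert, coverSet_insert]
  exact Finset.card_union_add_card_le_of_subset (coverSet_mono E w T hAB) _

end Coverage

theorem influence_submodular_general
    {V : Type*} [Fintype V] [DecidableEq V] {Ω : Type*} [MeasurableSpace Ω]
    (μ : Measure Ω)
    (E : V → V → Prop) (τ : Ω → V → V → ℝ≥0∞) (T : ℝ≥0)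
    (hint : ∀ A : Finset V, Integrable (fun ω =>
      ((Finset.univ.filter fun i : V =>
        (⨅ s ∈ A, spDist E (τ ω) s i) ≤ (T : ℝ≥0∞)).card : ℝ)) μ)
    (A B : Finset V) (hAB : A ⊆ B) (v : V) :
    influence μ E τ (insert v B) T - influence μ E τ B T
      ≤ influence μ E τ (insert v A) T - influence μ E τ A T := by
  refine integral_sub_le_integral_sub_of_add_le (hint _) (hint _) (hint _) (hint _) fun ω => ?_
  exact_mod_cast card_coverSet_insert_add_card_le E (τ ω) T hAB v

/-- The influence function is submodular: for `A ⊆ B` and `v ∉ B`,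
`σ(A ∪ {v}, T) - σ(A, T) ≥ σ(B ∪ {v}, T) - σ(B, T)`. -/
theorem influence_submodular
    {V : Type*} [Fintype V] [DecidableEq V] {Ω : Type*} [MeasurableSpace Ω]
    (μ : Measure Ω) [IsProbabilityMeasure μ]
    (E : V → V → Prop) (τ : Ω → V → V → ℝ≥0∞) (T : ℝ≥0)
    (hint : ∀ A : Finset V, Integrable (fun ω =>
      ((Finset.univ.filter fun i : V =>
        (⨅ s ∈ A, spDist E (τ ω) s i) ≤ (T : ℝ≥0∞)).card : ℝ)) μ)
    (A B : Finset V) (hAB : A ⊆ B) (v : V) (hv : v ∉ B) :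
    influence μ E τ (insert v B) T - influence μ E τ B T
      ≤ influence μ E τ (insert v A) T - influence μ E τ A T :=
  influence_submodular_general μ E τ T hint A B hAB v
end

section
/- Let σ : Finset V → ℝ be monotone and submodular with σ(∅) = 0, let A* be an optimal set of size C, and let A_{k} be greedy sets with noisy selection such that each chosen element's true marginal gain is within 2ε of the maximum true marginal gain. Then σ(A_C) ≥ (1 - (1 - 1/C)^C)·σ(A*) - 2Cε. -/
open Finset

/-- Greedy with per-step additive error: if σ is monotone submodular with
σ(∅) = 0, A* is optimal among sets of size ≤ C (with |A*| = C), and at each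
greedy step the chosen element's true marginal gain is within 2ε of the best
true marginal gain, then σ(A C) ≥ (1 - (1 - 1/C)^C)·σ(A*) - 2Cε. -/
theorem greedy_with_additive_error
    {V : Type*} [Fintype V] [DecidableEq V] [Nonempty V]
    (σ : Finset V → ℝ) (ε : ℝ) (hε : 0 ≤ ε) (C : ℕ) (hC : 1 ≤ C)
    (hmono : ∀ A B : Finset V, A ⊆ B → σ A ≤ σ B)
    (hsubmod : ∀ A B : Finset V, A ⊆ B → ∀ v ∉ B,
      σ (insert v B) - σ B ≤ σ (insert v A) - σ A)
    (hzero : σ ∅ = 0)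
    (Astar : Finset V) (hAstar_card : Astar.card = C)
    (hAstar_opt : ∀ B : Finset V, B.card ≤ C → σ B ≤ σ Astar)
    (A : ℕ → Finset V) (hA0 : A 0 = ∅)
    (hgreedy : ∀ k < C, ∃ i ∉ A k,
      A (k + 1) = insert i (A k) ∧
      ∀ j : V, σ (insert j (A k)) - σ (A k) - 2 * ε
        ≤ σ (insert i (A k)) - σ (A k)) :
    σ (A C) ≥ (1 - (1 - 1 / (C : ℝ)) ^ C) * σ Astar - 2 * C * ε := by
  have hCpos : (0:ℝ) < C := by exact_mod_cast hC
  set r : ℝ := 1 - 1 / (C:ℝ) with hr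
  have hr0 : 0 ≤ r := by
    rw [hr, sub_nonneg, div_le_one hCpos]; exact_mod_cast hC
  have hr1 : r ≤ 1 := by
    have : 0 ≤ 1 / (C:ℝ) := by positivity
    simp only [hr]; linarith
  -- submodular telescoping sum bound
  have hsum : ∀ S B : Finset V, σ (B ∪ S) - σ B ≤ ∑ v ∈ S, (σ (insert v B) - σ B) := by
    intro S
    induction S using Finset.induction_on with
    | empty => intro B; simp
    | @insert a S ha ih =>
      intro B
      rw [Finset.sum_insert ha]
      have hU : B ∪ insert a S = insert a (B ∪ S) := by
        ext x; simp [or_comm, or_assoc, or_left_comm]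
      have h1 : σ (insert a (B ∪ S)) - σ (B ∪ S) ≤ σ (insert a B) - σ B := by
        by_cases haBS : a ∈ B ∪ S
        · rw [Finset.insert_eq_self.mpr haBS]
          have := hmono B (insert a B) (Finset.subset_insert a B)
          linarith
        · exact hsubmod B (B ∪ S) Finset.subset_union_left a haBS
      have h2 := ih B
      rw [hU]
      linarith
  -- per-step recursion
  have hstep : ∀ k < C, σ Astar - σ (A (k+1)) ≤ r * (σ Astar - σ (A k)) + 2 * ε := by
    intro k hk
    obtain ⟨i, hi, hA1, hbest⟩ := hgreedy k hk
    set g : ℝ := σ (A (k+1)) - σ (A k) with hg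
    have hgi : σ (A (k+1)) = σ (insert i (A k)) := by rw [hA1]
    have hbound : σ Astar - σ (A k) ≤ (C:ℝ) * (g + 2 * ε) := by
      have h1 : σ Astar ≤ σ (A k ∪ Astar) :=
        hmono _ _ Finset.subset_union_right
      have h2 := hsum Astar (A k)
      have h3 : ∑ v ∈ Astar, (σ (insert v (A k)) - σ (A k)) ≤ (C:ℝ) * (g + 2 * ε) := by
        calc ∑ v ∈ Astar, (σ (insert v (A k)) - σ (A k))
            ≤ ∑ _v ∈ Astar, (g + 2 * ε) := by
              apply Finset.sum_le_sum
              intro v _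
              have := hbest v
              rw [hg, hgi]; linarith
          _ = (C:ℝ) * (g + 2 * ε) := by
              rw [Finset.sum_const, hAstar_card, nsmul_eq_mul]
      linarith
    have hdiv : (σ Astar - σ (A k)) / (C:ℝ) ≤ g + 2 * ε := by
      rw [div_le_iff₀ hCpos]; linarith [hbound]
    have hexp : r * (σ Astar - σ (A k))
        = (σ Astar - σ (A k)) - (σ Astar - σ (A k)) / (C:ℝ) := by
      rw [hr]; ring
    have hAeq : σ Astar - σ (A (k+1)) = σ Astar - σ (A k) - g := by rw [hg]; ring
    rw [hAeq, hexp]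
    linarith [hdiv]
  -- induction
  have hind : ∀ k, k ≤ C → σ Astar - σ (A k) ≤ r ^ k * σ Astar + 2 * k * ε := by
    intro k
    induction k with
    | zero => intro _; simp [hA0, hzero]
    | succ n ih =>
      intro hn
      have hnC : n < C := hn
      have h1 := hstep n hnC
      have h2 := ih (le_of_lt hnC)
      have h3 : r * (σ Astar - σ (A n)) ≤ r * (r ^ n * σ Astar + 2 * n * ε) :=
        mul_le_mul_of_nonneg_left h2 hr0
      have h4 : r * (2 * (n:ℝ) * ε) ≤ 2 * n * ε := by
        have hn0 : (0:ℝ) ≤ 2 * (n:ℝ) * ε := by positivity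
        nlinarith
      have : r * (r ^ n * σ Astar) = r ^ (n+1) * σ Astar := by ring
      push_cast
      nlinarith
  have hfin := hind C le_rfl
  have hexpand : (1 - r ^ C) * σ Astar = σ Astar - r ^ C * σ Astar := by ring
  linarith
end
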